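/- There exists a finite constant C such that for every ε > 0, every y ≥ 3ε, and every x₀ ∈ ℝ⁹ with |x₀| ≤ ε: ∫₀^∞ ∫_{ℝ⁹} p_b(z) |x₀ + z|^{−2} · 1{ y − ε < |x₀ + z| < y + ε } dz db ≤ C·ε/y. -/
import Mathlib

open MeasureTheory

/-- The density of the centered Gaussian measure with covariance `t·Id` on `ℝ⁹`:
`p_t(z) = (2πt)^{−9/2} exp(−|z|²/(2t))`. -/
noncomputable def gaussDensity (t : ℝ) (z : EuclideanSpace ℝ (Fin 9)) : ℝ :=
  (2 * Real.pi * t) ^ (-(9 : ℝ) / 2) * Real.exp (-‖z‖ ^ 2 / (2 * t))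

lemma exp_neg_le_aux (x : ℝ) (hx : 0 < x) : Real.exp (-x) ≤ 3125 / x ^ 5 := by
  have h1 : x / 5 ≤ Real.exp (x / 5) :=
    le_trans (by linarith) (Real.add_one_le_exp (x / 5))
  have h2 : (x / 5) ^ 5 ≤ Real.exp (x / 5) ^ 5 := pow_le_pow_left₀ (by positivity) h1 5
  have h3 : Real.exp (x / 5) ^ 5 = Real.exp x := by
    rw [← Real.exp_nat_mul]; congr 1; push_cast; ring
  have h4 : x ^ 5 / 3125 ≤ Real.exp x := by
    rw [← h3]
    calc x ^ 5 / 3125 = (x / 5) ^ 5 := by ring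
      _ ≤ _ := h2
  rw [Real.exp_neg]
  calc (Real.exp x)⁻¹ ≤ (x ^ 5 / 3125)⁻¹ := by
        apply inv_anti₀ (by positivity) h4
    _ = 3125 / x ^ 5 := by field_simp

lemma poly_ineq_aux (ε y : ℝ) (hε : 0 < ε) (h : 3 * ε ≤ y) :
    (y + ε) ^ 9 ≤ 40 * ε * y ^ 8 + (y - ε) ^ 9 := by
  have hy : 0 < y := by linarith
  have h2 : ε ^ 2 ≤ y ^ 2 / 9 := by nlinarith
  have t1 : ε ^ 3 * y ^ 6 ≤ ε * y ^ 8 / 9 := by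
    nlinarith [mul_le_mul_of_nonneg_right h2 (show (0:ℝ) ≤ ε * y ^ 6 by positivity)]
  have h4 : ε ^ 4 ≤ y ^ 4 / 81 := by nlinarith [sq_nonneg ε]
  have t2 : ε ^ 5 * y ^ 4 ≤ ε * y ^ 8 / 81 := by
    nlinarith [mul_le_mul_of_nonneg_right h4 (show (0:ℝ) ≤ ε * y ^ 4 by positivity)]
  have h6 : ε ^ 6 ≤ y ^ 6 / 729 := by nlinarith [pow_le_pow_left₀ (sq_nonneg ε) h2 3]
  have t3 : ε ^ 7 * y ^ 2 ≤ ε * y ^ 8 / 729 := by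
    nlinarith [mul_le_mul_of_nonneg_right h6 (show (0:ℝ) ≤ ε * y ^ 2 by positivity)]
  have h8 : ε ^ 8 ≤ y ^ 8 / 6561 := by nlinarith [pow_le_pow_left₀ (sq_nonneg ε) h2 4]
  have t4 : ε ^ 9 ≤ ε * y ^ 8 / 6561 := by
    nlinarith [mul_le_mul_of_nonneg_right h8 hε.le]
  nlinarith [t1, t2, t3, t4, mul_pos hε (pow_pos hy 8)]

/-- There is a finite constant `C` such that for every `ε > 0`, every `y ≥ 3ε` and every
`x₀ ∈ ℝ⁹` with `|x₀| ≤ ε`: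
`∫₀^∞ ∫_{ℝ⁹} p_b(z) |x₀+z|^{−2} 1{y−ε < |x₀+z| < y+ε} dz db ≤ C·ε/y`. -/
theorem stmt5 :
    ∃ C : ℝ, ∀ ε y : ℝ, 0 < ε → 3 * ε ≤ y →
      ∀ x₀ : EuclideanSpace ℝ (Fin 9), ‖x₀‖ ≤ ε →
        (∫⁻ b in Set.Ioi (0 : ℝ), ∫⁻ z, ENNReal.ofReal
            (gaussDensity b z * ‖x₀ + z‖ ^ (-2 : ℝ) *
              Set.indicator (Set.Ioo (y - ε) (y + ε)) 1 ‖x₀ + z‖))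
          ≤ ENNReal.ofReal (C * ε / y) := by
  refine ⟨3126 * 104976 * 90 * (Real.sqrt Real.pi ^ 9 / Real.Gamma ((9:ℝ) / 2 + 1)),
    fun ε y hε hy x₀ hx₀ => ?_⟩
  have hy0 : 0 < y := by linarith
  set κ : ℝ := Real.sqrt Real.pi ^ 9 / Real.Gamma ((9:ℝ) / 2 + 1) with hκ_def
  have hκ : 0 ≤ κ := div_nonneg (pow_nonneg (Real.sqrt_nonneg _) _)
    (Real.Gamma_pos_of_pos (by norm_num)).le
  set m : ℝ := y ^ 2 / 18 with hm_def
  have hm : 0 < m := by positivity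
  set cy : ℝ := (2 * y / 3) ^ (-2 : ℝ) with hcy_def
  have hcy0 : 0 ≤ cy := Real.rpow_nonneg (by linarith) _
  set S : Set (EuclideanSpace ℝ (Fin 9)) :=
    (fun z => ‖x₀ + z‖) ⁻¹' (Set.Ioo (y - ε) (y + ε)) with hS_def
  have hScont : Measurable (fun z : EuclideanSpace ℝ (Fin 9) => ‖x₀ + z‖) :=
    (continuous_const.add continuous_id).norm.measurable
  have hS : MeasurableSet S := hScont measurableSet_Ioo
  -- volume of the shell
  have hSeq : S = Metric.ball (-x₀) (y + ε) \ Metric.closedBall (-x₀) (y - ε) := by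
    ext z
    simp only [hS_def, Set.mem_preimage, Set.mem_Ioo, Set.mem_diff, Metric.mem_ball,
      Metric.mem_closedBall, dist_eq_norm, sub_neg_eq_add, not_le]
    rw [add_comm z x₀]
    tauto
  have hvolball : ∀ r : ℝ, volume (Metric.ball (-x₀) r)
      = ENNReal.ofReal r ^ 9 * ENNReal.ofReal κ := by
    intro r
    rw [EuclideanSpace.volume_ball]
    norm_num [hκ_def]
  have hvolcball : ∀ r : ℝ, volume (Metric.closedBall (-x₀) r)
      = ENNReal.ofReal r ^ 9 * ENNReal.ofReal κ := by
    intro r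
    rw [EuclideanSpace.volume_closedBall]
    norm_num [hκ_def]
  have hvolS : volume S ≤ ENNReal.ofReal (40 * ε * y ^ 8 * κ) := by
    rw [hSeq, measure_diff (Metric.closedBall_subset_ball (by linarith))
      measurableSet_closedBall.nullMeasurableSet measure_closedBall_lt_top.ne,
      hvolball, hvolcball]
    rw [tsub_le_iff_right]
    calc ENNReal.ofReal (y + ε) ^ 9 * ENNReal.ofReal κ
        = ENNReal.ofReal ((y + ε) ^ 9) * ENNReal.ofReal κ := by
          rw [← ENNReal.ofReal_pow (by linarith)]
      _ ≤ ENNReal.ofReal (40 * ε * y ^ 8 + (y - ε) ^ 9) * ENNReal.ofReal κ := by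
          exact mul_le_mul_left (ENNReal.ofReal_le_ofReal (poly_ineq_aux ε y hε hy)) _
      _ = (ENNReal.ofReal (40 * ε * y ^ 8) + ENNReal.ofReal ((y - ε) ^ 9)) * ENNReal.ofReal κ := by
          rw [ENNReal.ofReal_add (by nlinarith [pow_nonneg hy0.le 8]) (by nlinarith [pow_nonneg (show (0:ℝ) ≤ y - ε by linarith) 9])]
      _ = ENNReal.ofReal (40 * ε * y ^ 8 * κ) + ENNReal.ofReal (y - ε) ^ 9 * ENNReal.ofReal κ := by
          rw [add_mul, ← ENNReal.ofReal_mul (by nlinarith [pow_nonneg hy0.le 8]),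
            ENNReal.ofReal_pow (by linarith : (0:ℝ) ≤ y - ε)]
  have hk_ne : ENNReal.ofReal cy * volume S ≠ ⊤ :=
    ENNReal.mul_ne_top ENNReal.ofReal_ne_top (lt_of_le_of_lt hvolS ENNReal.ofReal_lt_top).ne
  -- pointwise bound for z in the shell
  have hpt : ∀ b : ℝ, 0 < b → ∀ z : EuclideanSpace ℝ (Fin 9), z ∈ S →
      gaussDensity b z * ‖x₀ + z‖ ^ (-2 : ℝ)
        ≤ b ^ (-(9:ℝ) / 2) * Real.exp (-m / b) * cy := by
    intro b hb z hz
    have hz' : ‖x₀ + z‖ ∈ Set.Ioo (y - ε) (y + ε) := hz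
    obtain ⟨hz1, hz2⟩ := hz'
    have hnz : y / 3 ≤ ‖z‖ := by
      have h1 : ‖x₀ + z‖ - ‖x₀‖ ≤ ‖x₀ + z - x₀‖ := norm_sub_norm_le _ _
      rw [add_sub_cancel_left] at h1
      linarith
    have hgauss : gaussDensity b z ≤ b ^ (-(9:ℝ) / 2) * Real.exp (-m / b) := by
      unfold gaussDensity
      apply mul_le_mul
      · exact Real.rpow_le_rpow_of_nonpos hb (by nlinarith [Real.pi_gt_three]) (by norm_num)
      · apply Real.exp_le_exp.2
        have hz2' : y ^ 2 / 9 ≤ ‖z‖ ^ 2 := by nlinarith [norm_nonneg z]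
        have hdiv : m / b ≤ ‖z‖ ^ 2 / (2 * b) := by
          rw [div_le_div_iff₀ hb (by linarith : (0:ℝ) < 2 * b)]
          nlinarith [mul_le_mul_of_nonneg_right hz2' hb.le]
        rw [neg_div, neg_div, neg_le_neg_iff]
        exact hdiv
      · exact (Real.exp_pos _).le
      · exact Real.rpow_nonneg hb.le _
    have hrp : ‖x₀ + z‖ ^ (-2 : ℝ) ≤ cy :=
      Real.rpow_le_rpow_of_nonpos (by linarith) (by linarith) (by norm_num)
    exact mul_le_mul hgauss hrp (Real.rpow_nonneg (norm_nonneg _) _)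
      (mul_nonneg (Real.rpow_nonneg hb.le _) (Real.exp_pos _).le)
  -- inner z-integral bound
  have inner : ∀ b ∈ Set.Ioi (0:ℝ),
      (∫⁻ z, ENNReal.ofReal (gaussDensity b z * ‖x₀ + z‖ ^ (-2 : ℝ) *
        Set.indicator (Set.Ioo (y - ε) (y + ε)) 1 ‖x₀ + z‖))
      ≤ ENNReal.ofReal (b ^ (-(9:ℝ) / 2) * Real.exp (-m / b))
          * (ENNReal.ofReal cy * volume S) := by
    intro b hb
    have hb' : 0 < b := hb
    calc (∫⁻ z, ENNReal.ofReal (gaussDensity b z * ‖x₀ + z‖ ^ (-2 : ℝ) *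
            Set.indicator (Set.Ioo (y - ε) (y + ε)) 1 ‖x₀ + z‖))
        ≤ ∫⁻ z, S.indicator
            (fun _ => ENNReal.ofReal (b ^ (-(9:ℝ) / 2) * Real.exp (-m / b) * cy)) z := by
          apply lintegral_mono
          intro z
          dsimp only
          by_cases hz : z ∈ S
          · rw [Set.indicator_of_mem hz]
            have hz' : ‖x₀ + z‖ ∈ Set.Ioo (y - ε) (y + ε) := hz
            rw [Set.indicator_of_mem hz', Pi.one_apply, mul_one]
            exact ENNReal.ofReal_le_ofReal (hpt b hb' z hz)
          · have hz' : ‖x₀ + z‖ ∉ Set.Ioo (y - ε) (y + ε) := hz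
            rw [Set.indicator_of_notMem hz, Set.indicator_of_notMem hz', mul_zero,
              ENNReal.ofReal_zero]
      _ = ENNReal.ofReal (b ^ (-(9:ℝ) / 2) * Real.exp (-m / b) * cy) * volume S :=
          lintegral_indicator_const hS _
      _ = ENNReal.ofReal (b ^ (-(9:ℝ) / 2) * Real.exp (-m / b))
            * (ENNReal.ofReal cy * volume S) := by
          rw [ENNReal.ofReal_mul
            (mul_nonneg (Real.rpow_nonneg hb'.le _) (Real.exp_pos _).le), mul_assoc]
  -- the b-integral bound
  have hmb : m ^ (-(7:ℝ)/2) ≤ 104976 / y ^ 7 := by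
    have e1 : m ^ (-(7:ℝ)/2) = (y ^ 2) ^ (-(7:ℝ)/2) * (18:ℝ) ^ ((7:ℝ)/2) := by
      have e18 : (18:ℝ) ^ (-(7:ℝ)/2) = ((18:ℝ) ^ ((7:ℝ)/2))⁻¹ := by
        rw [show (-(7:ℝ)/2) = -((7:ℝ)/2) by ring, Real.rpow_neg (by norm_num : (0:ℝ) ≤ 18)]
      rw [hm_def, Real.div_rpow (sq_nonneg y) (by norm_num), e18, div_eq_mul_inv, inv_inv]
    have e2 : ((y:ℝ) ^ 2) ^ (-(7:ℝ)/2) = (y ^ 7)⁻¹ := by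
      rw [← Real.rpow_natCast y 2, ← Real.rpow_mul hy0.le,
        show ((2:ℕ):ℝ) * (-(7:ℝ)/2) = -((7:ℕ):ℝ) by push_cast; ring,
        Real.rpow_neg hy0.le, Real.rpow_natCast]
    have e3 : (18:ℝ) ^ ((7:ℝ)/2) ≤ 104976 := by
      calc (18:ℝ) ^ ((7:ℝ)/2) ≤ (18:ℝ) ^ (((4:ℕ):ℝ)) :=
            Real.rpow_le_rpow_of_exponent_le (by norm_num) (by push_cast; norm_num)
        _ = 104976 := by rw [Real.rpow_natCast]; norm_num
    calc m ^ (-(7:ℝ)/2) = (y ^ 7)⁻¹ * 18 ^ ((7:ℝ)/2) := by rw [e1, e2]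
      _ ≤ (y ^ 7)⁻¹ * 104976 := mul_le_mul_of_nonneg_left e3 (inv_nonneg.2 (pow_nonneg hy0.le 7))
      _ = 104976 / y ^ 7 := by ring
  have hG : (∫⁻ b in Set.Ioi (0:ℝ), ENNReal.ofReal (b ^ (-(9:ℝ) / 2) * Real.exp (-m / b)))
      ≤ ENNReal.ofReal (3126 * (104976 / y ^ 7)) := by
    rw [show Set.Ioi (0:ℝ) = Set.Ioc 0 m ∪ Set.Ioi m from (Set.Ioc_union_Ioi_eq_Ioi hm.le).symm,
      lintegral_union measurableSet_Ioi (Set.Ioc_disjoint_Ioi le_rfl)]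
    have hA : (∫⁻ b in Set.Ioc (0:ℝ) m, ENNReal.ofReal (b ^ (-(9:ℝ) / 2) * Real.exp (-m / b)))
        ≤ ENNReal.ofReal (3125 * m ^ (-(7:ℝ)/2)) := by
      calc (∫⁻ b in Set.Ioc (0:ℝ) m, ENNReal.ofReal (b ^ (-(9:ℝ) / 2) * Real.exp (-m / b)))
          ≤ ∫⁻ _ in Set.Ioc (0:ℝ) m, ENNReal.ofReal (3125 * m ^ (-(9:ℝ)/2)) := by
            apply setLIntegral_mono' measurableSet_Ioc
            intro b hb
            apply ENNReal.ofReal_le_ofReal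
            obtain ⟨hb0, hbm⟩ := hb
            have h1 : Real.exp (-m / b) ≤ 3125 * b ^ 5 / m ^ 5 := by
              calc Real.exp (-m / b) = Real.exp (-(m / b)) := by rw [neg_div]
                _ ≤ 3125 / (m / b) ^ 5 := exp_neg_le_aux _ (div_pos hm hb0)
                _ = 3125 * b ^ 5 / m ^ 5 := by
                    rw [div_pow]; field_simp
            calc b ^ (-(9:ℝ) / 2) * Real.exp (-m / b)
                ≤ b ^ (-(9:ℝ) / 2) * (3125 * b ^ 5 / m ^ 5) :=
                  mul_le_mul_of_nonneg_left h1 (Real.rpow_nonneg hb0.le _)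
              _ = 3125 * (b ^ (-(9:ℝ) / 2) * b ^ (((5:ℕ)):ℝ)) / m ^ 5 := by
                  rw [Real.rpow_natCast]; ring
              _ = 3125 * b ^ ((1:ℝ)/2) / m ^ 5 := by
                  rw [← Real.rpow_add hb0]; norm_num
              _ ≤ 3125 * m ^ ((1:ℝ)/2) / m ^ 5 := by
                  gcongr
              _ = 3125 * m ^ (-(9:ℝ)/2) := by
                  rw [← Real.rpow_natCast m 5, mul_div_assoc, ← Real.rpow_sub hm]
                  norm_num
        _ = ENNReal.ofReal (3125 * m ^ (-(9:ℝ)/2)) * volume (Set.Ioc (0:ℝ) m) :=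
            setLIntegral_const _ _
        _ = ENNReal.ofReal (3125 * m ^ (-(9:ℝ)/2)) * ENNReal.ofReal m := by
            rw [Real.volume_Ioc, sub_zero]
        _ = ENNReal.ofReal (3125 * m ^ (-(9:ℝ)/2) * m) :=
            (ENNReal.ofReal_mul (mul_nonneg (by norm_num) (Real.rpow_nonneg hm.le _))).symm
        _ = ENNReal.ofReal (3125 * m ^ (-(7:ℝ)/2)) := by
            congr 1
            rw [show (3125:ℝ) * m ^ (-(9:ℝ)/2) * m
                = 3125 * (m ^ (-(9:ℝ)/2) * m ^ (1:ℝ)) by rw [Real.rpow_one]; ring,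
              ← Real.rpow_add hm]
            norm_num
    have hB : (∫⁻ b in Set.Ioi m, ENNReal.ofReal (b ^ (-(9:ℝ) / 2) * Real.exp (-m / b)))
        ≤ ENNReal.ofReal ((2/7) * m ^ (-(7:ℝ)/2)) := by
      calc (∫⁻ b in Set.Ioi m, ENNReal.ofReal (b ^ (-(9:ℝ) / 2) * Real.exp (-m / b)))
          ≤ ∫⁻ b in Set.Ioi m, ENNReal.ofReal (b ^ (-(9:ℝ) / 2)) := by
            apply setLIntegral_mono' measurableSet_Ioi
            intro b hb
            apply ENNReal.ofReal_le_ofReal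
            have hb0 : 0 < b := hm.trans hb
            have he1 : Real.exp (-m / b) ≤ 1 := by
              rw [Real.exp_le_one_iff, neg_div]
              exact neg_nonpos.2 (div_nonneg hm.le hb0.le)
            exact mul_le_of_le_one_right (Real.rpow_nonneg hb0.le _) he1
        _ = ENNReal.ofReal (∫ b in Set.Ioi m, b ^ (-(9:ℝ) / 2)) := by
            refine (ofReal_integral_eq_lintegral_ofReal
              (integrableOn_Ioi_rpow_of_lt (by norm_num) hm) ?_).symm
            refine (ae_restrict_iff' measurableSet_Ioi).2 (ae_of_all _ fun x hx => ?_)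
            exact Real.rpow_nonneg (hm.trans hx).le _
        _ = ENNReal.ofReal (-m ^ (-(9:ℝ)/2 + 1) / (-(9:ℝ)/2 + 1)) := by
            rw [integral_Ioi_rpow_of_lt (by norm_num) hm]
        _ = ENNReal.ofReal ((2/7) * m ^ (-(7:ℝ)/2)) := by
            congr 1
            rw [show (-(9:ℝ)/2 + 1) = -(7:ℝ)/2 by norm_num]
            ring
    calc (∫⁻ b in Set.Ioc (0:ℝ) m, ENNReal.ofReal (b ^ (-(9:ℝ) / 2) * Real.exp (-m / b)))
          + ∫⁻ b in Set.Ioi m, ENNReal.ofReal (b ^ (-(9:ℝ) / 2) * Real.exp (-m / b))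
        ≤ ENNReal.ofReal (3125 * m ^ (-(7:ℝ)/2)) + ENNReal.ofReal ((2/7) * m ^ (-(7:ℝ)/2)) :=
          add_le_add hA hB
      _ = ENNReal.ofReal (3125 * m ^ (-(7:ℝ)/2) + (2/7) * m ^ (-(7:ℝ)/2)) :=
          (ENNReal.ofReal_add (mul_nonneg (by norm_num) (Real.rpow_nonneg hm.le _))
            (mul_nonneg (by norm_num) (Real.rpow_nonneg hm.le _))).symm
      _ ≤ ENNReal.ofReal (3126 * (104976 / y ^ 7)) := by
          apply ENNReal.ofReal_le_ofReal
          nlinarith [hmb, Real.rpow_nonneg hm.le (-(7:ℝ)/2), pow_pos hy0 7]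
  have hcy_eq : cy = 9 / (4 * y ^ 2) := by
    rw [hcy_def, show (-2:ℝ) = -((2:ℕ):ℝ) by push_cast; ring,
      Real.rpow_neg (by linarith), Real.rpow_natCast, inv_eq_one_div,
      div_eq_div_iff (by positivity) (by positivity)]
    ring
  calc (∫⁻ b in Set.Ioi (0 : ℝ), ∫⁻ z, ENNReal.ofReal
          (gaussDensity b z * ‖x₀ + z‖ ^ (-2 : ℝ) *
            Set.indicator (Set.Ioo (y - ε) (y + ε)) 1 ‖x₀ + z‖))
      ≤ ∫⁻ b in Set.Ioi (0:ℝ), ENNReal.ofReal (b ^ (-(9:ℝ) / 2) * Real.exp (-m / b))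
          * (ENNReal.ofReal cy * volume S) :=
        setLIntegral_mono' measurableSet_Ioi inner
    _ = (∫⁻ b in Set.Ioi (0:ℝ), ENNReal.ofReal (b ^ (-(9:ℝ) / 2) * Real.exp (-m / b)))
          * (ENNReal.ofReal cy * volume S) :=
        lintegral_mul_const' _ _ hk_ne
    _ ≤ ENNReal.ofReal (3126 * (104976 / y ^ 7))
          * (ENNReal.ofReal cy * ENNReal.ofReal (40 * ε * y ^ 8 * κ)) :=
        mul_le_mul' hG (mul_le_mul_right hvolS _)
    _ = ENNReal.ofReal (3126 * (104976 / y ^ 7) * (cy * (40 * ε * y ^ 8 * κ))) := by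
        rw [← ENNReal.ofReal_mul hcy0, ← ENNReal.ofReal_mul
          (mul_nonneg (by norm_num) (div_nonneg (by norm_num) (pow_nonneg hy0.le 7)))]
    _ ≤ ENNReal.ofReal (3126 * 104976 * 90 * κ * ε / y) := by
        apply ENNReal.ofReal_le_ofReal
        apply le_of_eq
        rw [hcy_eq]
        field_simp
        ring
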